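/- arXiv:1505.01098 — 6 statements merged into one kernel-verified Lean document; each statement's English description precedes it below -/
import Mathlib

section
/- For any category C, the unit of the Isbell adjunction is an isomorphism at every representable presheaf: for each object x of C, the unit map yoneda.obj x ⟶ H_*(H^*(yoneda.obj x)) is an isomorphism of presheaves. Dually, the counit of the Isbell adjunction is an isomorphism at every representable postsheaf coyoneda (i.e., at Hom_C(x, −) viewed as an object of (C ⥤ Type)ᵒᵖ). -/
open CategoryTheory CategoryTheory.Limits Opposite

universe u

namespace DMCat

variable {A B : Type u} [SmallCategory A] [SmallCategory B]

/-- The presheaf `Φ(-, b)` associated to a profunctor `Φ : Aᵒᵖ × B ⥤ Type u`. -/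
def curryR (Φ : Aᵒᵖ × B ⥤ Type u) (b : B) : Aᵒᵖ ⥤ Type u :=
  (Functor.curry.obj Φ).flip.obj b

/-- The postsheaf `Φ(a, -)` associated to a profunctor `Φ : Aᵒᵖ × B ⥤ Type u`. -/
def curryL (Φ : Aᵒᵖ × B ⥤ Type u) (a : Aᵒᵖ) : B ⥤ Type u :=
  (Functor.curry.obj Φ).obj a

/-- The left extension `Φ^* : (Aᵒᵖ ⥤ Type u) ⥤ (B ⥤ Type u)ᵒᵖ`,
`(Φ^* α)(b) = Nat(α, Φ(-, b))`. -/
def upper (Φ : Aᵒᵖ × B ⥤ Type u) : (Aᵒᵖ ⥤ Type u) ⥤ (B ⥤ Type u)ᵒᵖ where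
  obj α := op
    { obj := fun b => α ⟶ curryR Φ b
      map := fun {b b'} g => TypeCat.ofHom fun t => t ≫ (Functor.curry.obj Φ).flip.map g
      map_id := by
        intro b
        apply ConcreteCategory.ext_apply; intro t
        change t ≫ (Functor.curry.obj Φ).flip.map (𝟙 b) = t
        simp only [CategoryTheory.Functor.map_id]; exact Category.comp_id t
      map_comp := by
        intro b b' b'' g g'
        apply ConcreteCategory.ext_apply; intro t
        change t ≫ (Functor.curry.obj Φ).flip.map (g ≫ g') = (t ≫ (Functor.curry.obj Φ).flip.map g) ≫ (Functor.curry.obj Φ).flip.map g'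
        rw [Functor.map_comp]; exact (Category.assoc _ _ _).symm }
  map {α α'} f := Quiver.Hom.op
    { app := fun b => TypeCat.ofHom fun t => f ≫ t
      naturality := by intro b b' g; apply ConcreteCategory.ext_apply; intro t; exact (Category.assoc f t _).symm }
  map_id := by intro α; apply Quiver.Hom.unop_inj; apply NatTrans.ext; funext b; apply ConcreteCategory.ext_apply; intro t; simp
  map_comp := by intro α α' α'' f f'; apply Quiver.Hom.unop_inj; apply NatTrans.ext; funext b; apply ConcreteCategory.ext_apply (C := Type u); intro t; simp

/-- The right extension `Φ_* : (B ⥤ Type u)ᵒᵖ ⥤ (Aᵒᵖ ⥤ Type u)`,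
`(Φ_* β)(a) = Nat(β, Φ(a, -))`. -/
def lower (Φ : Aᵒᵖ × B ⥤ Type u) : (B ⥤ Type u)ᵒᵖ ⥤ (Aᵒᵖ ⥤ Type u) where
  obj β :=
    { obj := fun a => β.unop ⟶ curryL Φ a
      map := fun {a a'} f => TypeCat.ofHom fun t => t ≫ (Functor.curry.obj Φ).map f
      map_id := by intro a; apply ConcreteCategory.ext_apply; intro t; change t ≫ (Functor.curry.obj Φ).map (𝟙 a) = t; simp only [CategoryTheory.Functor.map_id]; exact Category.comp_id t
      map_comp := by intro a a' a'' f f'; apply ConcreteCategory.ext_apply; intro t; change t ≫ (Functor.curry.obj Φ).map (f ≫ f') = (t ≫ (Functor.curry.obj Φ).map f) ≫ (Functor.curry.obj Φ).map f'; rw [Functor.map_comp]; exact (Category.assoc _ _ _).symm }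
  map {β β'} f :=
    { app := fun a => TypeCat.ofHom fun t => f.unop ≫ t
      naturality := by intro a a' g; apply ConcreteCategory.ext_apply; intro t; exact (Category.assoc f.unop t _).symm }
  map_id := by intro β; apply NatTrans.ext; funext a; apply ConcreteCategory.ext_apply; intro t; simp
  map_comp := by intro β β' β'' f f'; apply NatTrans.ext; funext a; apply ConcreteCategory.ext_apply (C := Type u); intro t; simp

/-- The adjunction `Φ^* ⊣ Φ_*`. -/
def matrixAdj (Φ : Aᵒᵖ × B ⥤ Type u) : upper Φ ⊣ lower Φ :=
  Adjunction.mkOfHomEquiv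
    { homEquiv := fun α β =>
        { toFun := fun t =>
            { app := fun a => TypeCat.ofHom fun x =>
                { app := fun b => TypeCat.ofHom fun y => ((t.unop.app b y).app a x : Φ.obj (a, b))
                  naturality := by
                    intro b b' g
                    apply ConcreteCategory.ext_apply; intro y
                    have h1 := congrArg (fun h => h y) (t.unop.naturality g)
                    have h1 := congrArg (fun s => (s.app a x)) h1
                    exact h1 }
              naturality := by
                intro a a' f
                apply ConcreteCategory.ext_apply; intro x; apply NatTrans.ext; funext b; apply ConcreteCategory.ext_apply; intro y
                have := congrArg (fun h => h x) ((t.unop.app b y).naturality f)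
                exact this }
          invFun := fun s => Quiver.Hom.op
            { app := fun b => TypeCat.ofHom fun y =>
                { app := fun a => TypeCat.ofHom fun x => ((s.app a x).app b y : Φ.obj (a, b))
                  naturality := by
                    intro a a' f
                    apply ConcreteCategory.ext_apply; intro x
                    have := congrArg (fun h => h x) (s.naturality f)
                    have := congrArg (fun s => s.app b y) this
                    exact this }
              naturality := by
                intro b b' g
                apply ConcreteCategory.ext_apply; intro y; apply NatTrans.ext; funext a; apply ConcreteCategory.ext_apply; intro x
                have := congrArg (fun h => h y) ((s.app a x).naturality g)
                exact this }
          left_inv := by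
            intro t
            apply Quiver.Hom.unop_inj
            ext b y a x
            rfl
          right_inv := by
            intro s
            ext a x b y
            rfl }
      homEquiv_naturality_left_symm := by
        intro α α' β f g
        apply Quiver.Hom.unop_inj
        ext b y a x
        rfl
      homEquiv_naturality_right := by
        intro α β β' f g
        ext a x b y
        rfl }

end DMCat

namespace DMCat

/-- The Isbell adjunction of a category `C`: the matrix adjunction of its hom profunctor. -/
def isbellAdj (C : Type u) [SmallCategory C] :
    upper (Functor.hom C) ⊣ lower (Functor.hom C) :=
  matrixAdj (Functor.hom C)

end DMCat

open DMCat

namespace IsbellAux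

variable {C : Type u} [SmallCategory C]

/-- The "identity" element of `curryR (Functor.hom C) x` seen from `yoneda.obj x`. -/
def jR (x : C) : yoneda.obj x ⟶ curryR (Functor.hom C) x where
  app a := TypeCat.ofHom fun g => g
  naturality := by
    intro a a' f
    apply ConcreteCategory.ext_apply; intro g
    change (f.unop ≫ g : a'.unop ⟶ x) = f.unop ≫ g ≫ 𝟙 x
    simp [ConcreteCategory.comp_apply, TypeCat.ofHom_apply, curryR, Functor.hom]

/-- The "identity" element of `curryL (Functor.hom C) (op x)` seen from `coyoneda.obj (op x)`. -/
def jL (x : C) : coyoneda.obj (op x) ⟶ curryL (Functor.hom C) (op x) where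
  app b := TypeCat.ofHom fun g => g
  naturality := by
    intro b b' f
    apply ConcreteCategory.ext_apply; intro g
    change (g ≫ f : x ⟶ b') = 𝟙 x ≫ g ≫ f
    simp [ConcreteCategory.comp_apply, TypeCat.ofHom_apply, curryL, Functor.hom]

lemma yoneda_key (x : C) {b : C} (y : yoneda.obj x ⟶ curryR (Functor.hom C) b)
    {a : Cᵒᵖ} (g : a.unop ⟶ x) :
    y.app a g = (g ≫ y.app (op x) (𝟙 x) : a.unop ⟶ b) := by
  have h : y.app a (g ≫ 𝟙 x : a.unop ⟶ x) = (g ≫ y.app (op x) (𝟙 x) ≫ 𝟙 b : a.unop ⟶ b) :=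
    ConcreteCategory.congr_hom (y.naturality g.op) (𝟙 x)
  simp [ConcreteCategory.comp_apply, TypeCat.ofHom_apply, curryR, Functor.hom] at h
  exact h

lemma coyoneda_key (x : C) {a : Cᵒᵖ} (t : coyoneda.obj (op x) ⟶ curryL (Functor.hom C) a)
    {b : C} (g : x ⟶ b) :
    t.app b g = (t.app x (𝟙 x) ≫ g : a.unop ⟶ b) := by
  have h : t.app b (𝟙 x ≫ g : x ⟶ b) = (𝟙 a.unop ≫ t.app x (𝟙 x) ≫ g : a.unop ⟶ b) :=
    ConcreteCategory.congr_hom (t.naturality g) (𝟙 x)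
  simp [ConcreteCategory.comp_apply, TypeCat.ofHom_apply, curryL, Functor.hom] at h
  exact h

end IsbellAux

open IsbellAux

/-- The unit of the Isbell adjunction is an isomorphism at every
representable presheaf, and the counit is an isomorphism at every representable
postsheaf (i.e. at `coyoneda.obj (op x)` viewed as an object of `(C ⥤ Type)ᵒᵖ`). -/
theorem isbell_unit_iso_at_representable_and_counit_iso_at_corepresentable
    (C : Type u) [SmallCategory C] (x : C) :
    IsIso ((isbellAdj C).unit.app (yoneda.obj x)) ∧
      IsIso ((isbellAdj C).counit.app (op (coyoneda.obj (op x)))) := by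
  constructor
  · rw [NatTrans.isIso_iff_isIso_app]
    intro a
    rw [isIso_iff_bijective]
    constructor
    · intro u v huv
      have h := congrArg (fun t => t.app x (jR x)) huv
      exact h
    · intro t
      refine ⟨t.app x (jR x), ?_⟩
      apply NatTrans.ext
      funext b; apply ConcreteCategory.ext_apply; intro y
      show y.app a (t.app x (jR x)) = t.app b y
      have hy : y = jR x ≫ (Functor.curry.obj (Functor.hom C)).flip.map (y.app (op x) (𝟙 x)) := by
        apply NatTrans.ext
        funext a'; apply ConcreteCategory.ext_apply; intro g
        have := yoneda_key x y (a := a') g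
        change _ = (𝟙 _ ≫ g ≫ y.app (op x) (𝟙 x) : a'.unop ⟶ b)
        simpa [ConcreteCategory.comp_apply, TypeCat.ofHom_apply, jR, curryR, Functor.hom] using this
      have hnat := ConcreteCategory.congr_hom (t.naturality (y.app (op x) (𝟙 x))) (jR x)
      have : t.app b (jR x ≫ (Functor.curry.obj (Functor.hom C)).flip.map (y.app (op x) (𝟙 x)))
          = t.app x (jR x) ≫ y.app (op x) (𝟙 x) := by
        change t.app b (jR x ≫ (Functor.curry.obj (Functor.hom C)).flip.map (y.app (op x) (𝟙 x)))
          = (𝟙 a.unop ≫ t.app x (jR x) ≫ y.app (op x) (𝟙 x) : a.unop ⟶ b) at hnat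
        simpa [ConcreteCategory.comp_apply, TypeCat.ofHom_apply, upper, curryL, Functor.hom] using hnat
      exact (yoneda_key x y (a := a) _).trans (this.symm.trans (congrArg (fun z => t.app b z) hy.symm))
  · rw [← isIso_unop_iff]
    rw [NatTrans.isIso_iff_isIso_app]
    intro b
    rw [isIso_iff_bijective]
    constructor
    · intro u v huv
      have h := congrArg (fun s => s.app (op x) (jL x)) huv
      exact h
    · intro s
      refine ⟨s.app (op x) (jL x), ?_⟩
      apply NatTrans.ext
      funext a; apply ConcreteCategory.ext_apply; intro t
      show t.app b (s.app (op x) (jL x)) = s.app a t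
      have ht : t = jL x ≫ (Functor.curry.obj (Functor.hom C)).map (t.app x (𝟙 x)).op := by
        apply NatTrans.ext
        funext b'; apply ConcreteCategory.ext_apply; intro g
        have := coyoneda_key x t (b := b') g
        change _ = (t.app x (𝟙 x) ≫ g ≫ 𝟙 b' : a.unop ⟶ b')
        simpa [ConcreteCategory.comp_apply, TypeCat.ofHom_apply, jL, curryL, Functor.hom] using this
      have hnat := ConcreteCategory.congr_hom (s.naturality (t.app x (𝟙 x)).op) (jL x)
      have : s.app a (jL x ≫ (Functor.curry.obj (Functor.hom C)).map (t.app x (𝟙 x)).op)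
          = t.app x (𝟙 x) ≫ s.app (op x) (jL x) := by
        change s.app a (jL x ≫ (Functor.curry.obj (Functor.hom C)).map (t.app x (𝟙 x)).op)
          = (t.app x (𝟙 x) ≫ s.app (op x) (jL x) ≫ 𝟙 b : a.unop ⟶ b) at hnat
        simpa [ConcreteCategory.comp_apply, TypeCat.ofHom_apply, lower, curryR, Functor.hom] using hnat
      exact (coyoneda_key x t (b := b) _).trans (this.symm.trans (congrArg (fun z => s.app a z) ht.symm))
end

section
/- Let F ⊣ U : Y → X be an adjunction (F : X ⥤ Y, U : Y ⥤ X) with induced monad T = U ∘ F on X. Let C be a full subcategory of X such that every object of X that is a retract of an object of the form U(y) for some y in Y is isomorphic to an object of C. Then T maps C into C, so it restricts to a monad T' on C, and there is a canonical equivalence of categories between the Eilenberg–Moore category X^T and the Eilenberg–Moore category C^{T'} of the restricted monad. (Here B is a retract of A when there are morphisms s : B ⟶ A and r : A ⟶ B with r ∘ s = id_B.) -/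
open CategoryTheory

universe v₁ v₂ u₁ u₂

/-- The restriction of a monad `T` on `X` to a full subcategory of `X` closed under `T`. -/
def restrictMonad {X : Type u₁} [Category.{v₁} X] (T : Monad X)
    (P : X → Prop) (hT : ∀ x : X, P x → P (T.obj x)) :
    Monad (ObjectProperty.FullSubcategory P) where
  toFunctor :=
    { obj := fun c => ⟨T.obj c.1, hT c.1 c.2⟩
      map := fun f => ObjectProperty.homMk (T.map f.hom)
      map_id := fun c => by ext; exact T.map_id c.1
      map_comp := fun f g => by ext; exact T.map_comp f.hom g.hom }
  η := { app := fun c => ObjectProperty.homMk (T.η.app c.1),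
         naturality := fun _ _ f => by ext; exact T.η.naturality f.hom }
  μ := { app := fun c => ObjectProperty.homMk (T.μ.app c.1),
         naturality := fun _ _ f => by ext; exact T.μ.naturality f.hom }
  left_unit c := by ext; exact T.left_unit c.1
  right_unit c := by ext; exact T.right_unit c.1
  assoc c := by ext; exact T.assoc c.1

/-- Let `F ⊣ U` be an adjunction with induced monad `T = U ∘ F` on `X`, and let
`C` be a full subcategory of `X` (given by a predicate `P`) containing every object of `X` that is
a retract of an object of the form `U(y)`.  Then `T` maps `C` into `C`, so it restricts to a monad
`T'` on `C`, and the Eilenberg–Moore category `X^T` is equivalent to `C^{T'}`. -/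
theorem algebra_equivalence_of_retracts_of_image {X : Type u₁} {Y : Type u₂}
    [Category.{v₁} X] [Category.{v₂} Y] {F : X ⥤ Y} {U : Y ⥤ X} (adj : F ⊣ U)
    (P : X → Prop)
    (hP : ∀ (x : X) (y : Y) (s : x ⟶ U.obj y) (r : U.obj y ⟶ x), s ≫ r = 𝟙 x → P x) :
    ∃ hT : ∀ x : X, P x → P (adj.toMonad.obj x),
      Nonempty (adj.toMonad.Algebra ≌ (restrictMonad adj.toMonad P hT).Algebra) := by

  have hT : ∀ x : X, P x → P (adj.toMonad.obj x) := fun x _ =>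
    hP _ (F.obj x) (𝟙 _) (𝟙 _) (Category.comp_id _)
  refine ⟨hT, ⟨?_⟩⟩
  have hA : ∀ A : adj.toMonad.Algebra, P A.A := fun A =>
    hP A.A (F.obj A.A) (adj.toMonad.η.app A.A) A.a A.unit
  exact {
    functor :=
      { obj := fun A =>
          { A := ⟨A.A, hA A⟩
            a := ObjectProperty.homMk A.a
            unit := by ext; exact A.unit
            assoc := by ext; exact A.assoc }
        map := fun f => { f := ObjectProperty.homMk f.f, h := by ext; exact f.h } }
    inverse :=
      { obj := fun B =>
          { A := B.A.1
            a := B.a.hom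
            unit := congrArg (fun g => g.hom) B.unit
            assoc := congrArg (fun g => g.hom) B.assoc }
        map := fun f => { f := f.f.hom, h := congrArg (fun g => g.hom) f.h } }
    unitIso := NatIso.ofComponents
      (fun A => Monad.Algebra.isoMk (Iso.refl _) (by rw [Iso.refl_hom, CategoryTheory.Functor.map_id]; exact (Category.id_comp _).trans (Category.comp_id _).symm))
      (by intros; ext; simp)
    counitIso := NatIso.ofComponents
      (fun B => Monad.Algebra.isoMk (Iso.refl _) (by aesop_cat))
      (by intros; ext; simp)
    functor_unitIso_comp := by intros; ext; simp [Monad.Algebra.isoMk] }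
end

section
/- Let R be a type with at least two elements. Then the contravariant power functor Setᵒᵖ → Set sending a set X to the function set X → R, and a function u : X → Y to the precomposition map (Y → R) → (X → R), is a monadic right adjoint (its left adjoint is the opposite of the same functor, Set → Setᵒᵖ, X ↦ (X → R); the induced monad on Set is the double dualization monad X ↦ ((X → R) → R)). -/
open CategoryTheory Opposite

universe u

/-- The contravariant power functor `Setᵒᵖ ⥤ Set`, `X ↦ (X → R)`, acting on maps
by precomposition. -/
def powerFunctor (R : Type u) : (Type u)ᵒᵖ ⥤ Type u where
  obj X := X.unop → R
  map f := TypeCat.ofHom (fun g => g ∘ f.unop)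
  map_id := by intro X; rfl
  map_comp := by intro X Y Z f g; rfl

/-- The same functor in the other direction, `Set ⥤ Setᵒᵖ`, `X ↦ (X → R)`. -/
def powerFunctorOp (R : Type u) : Type u ⥤ (Type u)ᵒᵖ where
  obj X := op (X → R)
  map f := Quiver.Hom.op (TypeCat.ofHom (fun g => g ∘ f))
  map_id := by intro X; rfl
  map_comp := by intro X Y Z f g; rfl

/-- The self-adjunction `R^(−) ⊣ R^(−)` inducing the double dualization monad
`X ↦ ((X → R) → R)` on `Set`. -/
def powerSelfAdj (R : Type u) : powerFunctorOp R ⊣ powerFunctor R :=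
  Adjunction.mkOfHomEquiv
    { homEquiv := fun X Y =>
        { toFun := fun t => TypeCat.ofHom (fun x y => t.unop y x)
          invFun := fun s => Quiver.Hom.op (TypeCat.ofHom (fun y x => s x y))
          left_inv := fun _ => rfl
          right_inv := fun _ => rfl }
      homEquiv_naturality_left_symm := by intro X X' Y f g; rfl
      homEquiv_naturality_right := by intro X Y Y' f g; rfl }

section Aux

theorem power_sep {R : Type u} {r₁ r₂ : R} (hr : r₁ ≠ r₂) {α : Type u} {x y : α}
    (h : ∀ q : α → R, q x = q y) : x = y := by
  classical
  have this := h (fun z => if z = x then r₁ else r₂)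
  rw [if_pos rfl] at this
  by_contra hxy
  rw [if_neg (fun hyx => hxy hyx.symm)] at this
  exact hr this

theorem powerFunctor_faithful {R : Type u} {r₁ r₂ : R} (hr : r₁ ≠ r₂) :
    (powerFunctor R).Faithful := by
  constructor
  intro X Y f g hfg
  apply Quiver.Hom.unop_inj
  ext y
  refine power_sep hr (fun q => ?_)
  exact congrFun (ConcreteCategory.congr_hom hfg q) y

/-- Any functional commuting with all operations is an evaluation: key claim for fullness. -/
theorem power_ev {R : Type u} {r₁ r₂ : R} (hr : r₁ ≠ r₂) {A B : Type u}
    (h : (A → R) → (B → R))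
    (hh : ∀ (Φ : ((A → R) → R) → R) (b : B),
      Φ (fun q => h q b) = h (fun a => Φ (fun q => q a)) b)
    (b : B) : ∃ a : A, ∀ q : A → R, h q b = q a := by
  classical
  by_contra hc
  push_neg at hc
  set φ : (A → R) → R := fun q => h q b with hφ
  have hne : ∀ a : A, (fun q : A → R => q a) ≠ φ := by
    intro a heq
    obtain ⟨q, hq⟩ := hc a
    exact hq (congrFun heq q).symm
  have h1 := hh (fun ψ => if ψ = φ then r₁ else r₂) b
  have h2 := hh (fun _ => r₂) b
  rw [if_pos rfl] at h1
  have e : (fun a : A => if (fun q : A → R => q a) = φ then r₁ else r₂) = fun _ : A => r₂ := by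
    funext a; exact if_neg (hne a)
  rw [e] at h1
  exact hr (h1.trans h2.symm)

theorem comparison_full {R : Type u} {r₁ r₂ : R} (hr : r₁ ≠ r₂) :
    (Monad.comparison (powerSelfAdj R)).Full := by
  constructor
  intro X Y h
  classical
  -- h.f : (X.unop → R) → (Y.unop → R)
  have hcond : ∀ (Φ : ((X.unop → R) → R) → R) (b : Y.unop),
      Φ (fun q => h.f q b) = h.f (fun a => Φ (fun q => q a)) b := by
    intro Φ b
    exact congrFun (ConcreteCategory.congr_hom h.h Φ) b
  have key := power_ev hr h.f hcond
  choose u hu using key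
  refine ⟨(Quiver.Hom.op (TypeCat.ofHom u : Y.unop ⟶ X.unop) : X ⟶ Y), ?_⟩
  apply Monad.Algebra.Hom.ext
  ext q
  funext b
  exact (hu b q).symm

/-- Injectivity of the canonical map into the double dual over algebra homs. -/
theorem algebra_sep {R : Type u} {r₁ r₂ : R} (hr : r₁ ≠ r₂)
    (Z : Monad.Algebra (powerSelfAdj R).toMonad) (a a' : Z.A)
    (hsep : ∀ p : Z.A → R, (∀ Ψ : (Z.A → R) → R, p (Z.a Ψ) = Ψ p) → p a = p a') :
    a = a' := by
  classical
  -- unit law, pointwise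
  have hunit : ∀ x : Z.A, Z.a (fun p => p x) = x := fun x => ConcreteCategory.congr_hom Z.unit x
  -- associativity law, pointwise
  have hassoc : ∀ Γ : (((Z.A → R) → R) → R) → R,
      Z.a (fun p => Γ (fun Ψ => Ψ p)) = Z.a (fun p => Γ (fun Ψ => p (Z.a Ψ))) :=
    fun Γ => ConcreteCategory.congr_hom Z.assoc Γ
  let j₁ : (Z.A → R) → (((Z.A → R) → R) → R) := fun p Ψ => Ψ p
  let j₂ : (Z.A → R) → (((Z.A → R) → R) → R) := fun p Ψ => p (Z.a Ψ)
  have j₁inj : ∀ p p', j₁ p = j₁ p' → p = p' := by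
    intro p p' hpp
    have this : (if p = p then r₁ else r₂) = (if p' = p then r₁ else r₂) :=
      congrFun hpp (fun q => if q = p then r₁ else r₂)
    rw [if_pos rfl] at this
    by_contra hne
    rw [if_neg (fun hq => hne hq.symm)] at this
    exact hr this
  have j₂inj : ∀ p p', j₂ p = j₂ p' → p = p' := by
    intro p p' hpp
    funext x
    calc p x = p (Z.a (fun q => q x)) := congrArg p (hunit x).symm
      _ = p' (Z.a (fun q => q x)) := congrFun hpp (fun q => q x)
      _ = p' x := congrArg p' (hunit x)
  have j₁₂ : ∀ p p', j₁ p = j₂ p' → p = p' := by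
    intro p p' hpp
    funext x
    calc p x = p' (Z.a (fun q => q x)) := congrFun hpp (fun q => q x)
      _ = p' x := congrArg p' (hunit x)
  -- the mediating functional
  let Γ : ((((Z.A → R) → R) → R) → R) := fun κ =>
    if h1 : ∃ p, j₁ p = κ then h1.choose a
    else if h2 : ∃ p, j₂ p = κ then h2.choose a' else r₁
  have hΓ₁ : ∀ p, Γ (j₁ p) = p a := by
    intro p
    have h1 : ∃ p', j₁ p' = j₁ p := ⟨p, rfl⟩
    show (if h1 : ∃ p', j₁ p' = j₁ p then h1.choose a
        else if h2 : ∃ p', j₂ p' = j₁ p then h2.choose a' else r₁) = p a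
    rw [dif_pos h1, j₁inj _ _ h1.choose_spec]
  have hΓ₂ : ∀ p, Γ (j₂ p) = p a' := by
    intro p
    show (if h1 : ∃ p', j₁ p' = j₂ p then h1.choose a
        else if h2 : ∃ p', j₂ p' = j₂ p then h2.choose a' else r₁) = p a'
    by_cases h1 : ∃ p', j₁ p' = j₂ p
    · rw [dif_pos h1]
      have hpeq : h1.choose = p := j₁₂ _ _ h1.choose_spec
      have hmem : ∀ Ψ : (Z.A → R) → R, p (Z.a Ψ) = Ψ p := by
        intro Ψ
        have := congrFun h1.choose_spec Ψ
        rw [hpeq] at this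
        exact this.symm
      rw [hpeq]
      exact hsep p hmem
    · have h2 : ∃ p', j₂ p' = j₂ p := ⟨p, rfl⟩
      rw [dif_neg h1, dif_pos h2, j₂inj _ _ h2.choose_spec]
  calc a = Z.a (fun p => p a) := (hunit a).symm
    _ = Z.a (fun p => Γ (j₁ p)) := by
        refine congrArg Z.a ?_
        funext p
        exact (hΓ₁ p).symm
    _ = Z.a (fun p => Γ (j₂ p)) := hassoc Γ
    _ = Z.a (fun p => p a') := by
        refine congrArg Z.a ?_
        funext p
        exact hΓ₂ p
    _ = a' := hunit a'

theorem comparison_essSurj {R : Type u} {r₁ r₂ : R} (hr : r₁ ≠ r₂) :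
    (Monad.comparison (powerSelfAdj R)).EssSurj := by
  constructor
  intro Z
  classical
  -- The set of algebra homomorphisms Z ⟶ R
  let X₀ : Type u := {h : Z.A → R // ∀ Ψ : (Z.A → R) → R, h (Z.a Ψ) = Ψ h}
  let θ : Z.A → (X₀ → R) := fun a h => h.1 a
  let P : (X₀ → R) → (Z.A → R) → R := fun g p =>
    if hp : ∀ Ψ : (Z.A → R) → R, p (Z.a Ψ) = Ψ p then g ⟨p, hp⟩ else r₁
  let s : (X₀ → R) → Z.A := fun g => Z.a (P g)
  have hθs : ∀ g, θ (s g) = g := by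
    intro g
    funext h
    calc θ (s g) h = h.1 (Z.a (P g)) := rfl
      _ = P g h.1 := h.2 (P g)
      _ = g h := dif_pos h.2
  have hsθ : ∀ a, s (θ a) = a := by
    intro a
    refine algebra_sep hr Z _ _ ?_
    intro p hp
    exact congrFun (hθs (θ a)) ⟨p, hp⟩
  refine ⟨op X₀, ⟨(Monad.Algebra.isoMk
    (⟨TypeCat.ofHom θ, TypeCat.ofHom s, ConcreteCategory.hom_ext _ _ hsθ,
      ConcreteCategory.hom_ext _ _ hθs⟩ :
      Z.A ≅ ((Monad.comparison (powerSelfAdj R)).obj (op X₀)).A) ?_).symm⟩⟩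
  ext Ψ
  funext h
  exact (h.2 Ψ).symm

end Aux

/-- If `R` has at least two elements, then the contravariant power functor
`R^(−) : Setᵒᵖ ⥤ Set` is a monadic right adjoint (with left adjoint its own opposite, the
induced monad being double dualization `X ↦ ((X → R) → R)`): the comparison functor to the
Eilenberg–Moore category of the induced monad is an equivalence. -/
theorem powerFunctor_monadic (R : Type u) (hR : ∃ r₁ r₂ : R, r₁ ≠ r₂) :
    Nonempty (MonadicRightAdjoint (powerFunctor R)) ∧
      (Monad.comparison (powerSelfAdj R)).IsEquivalence := by
  obtain ⟨r₁, r₂, hr⟩ := hR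
  haveI : (powerFunctor R).Faithful := powerFunctor_faithful hr
  haveI : (Monad.comparison (powerSelfAdj R)).Full := comparison_full hr
  haveI : (Monad.comparison (powerSelfAdj R)).EssSurj := comparison_essSurj hr
  have heqv : (Monad.comparison (powerSelfAdj R)).IsEquivalence := {}
  exact ⟨⟨⟨powerFunctorOp R, powerSelfAdj R, heqv⟩⟩, heqv⟩
end

section
/- Let G be a group with at least two elements. Let D be the full subcategory of the category of left G-sets whose objects are the one-element G-set and the free left G-sets G × I (action on the first coordinate), and let C be the full subcategory of the category of right G-sets whose objects are the one-element G-set and the free right G-sets I × G (action on the second coordinate). Then the functor Dᵒᵖ → C sending a left G-set Y to the set Hom_G(Y, G) of left-equivariant maps from Y to G (G with left multiplication), equipped with the right G-action (f • g)(y) = f(y) * g, is a monadic right adjoint. -/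
open CategoryTheory Opposite

universe u

namespace DMCat

/-- A left `G`-set, bundled: a carrier with a `G`-action.  (For `G` replaced by `Gᵐᵒᵖ` this is
a right `G`-set.) -/
structure GSet (G : Type u) [Monoid G] : Type (u + 1) where
  carrier : Type u
  smul : G → carrier → carrier
  one_smul : ∀ x, smul 1 x = x
  mul_smul : ∀ g h x, smul (g * h) x = smul g (smul h x)

variable {G : Type u} [Monoid G]

instance : Category (GSet G) where
  Hom X Y := {f : X.carrier → Y.carrier // ∀ g x, f (X.smul g x) = Y.smul g (f x)}
  id X := ⟨id, fun _ _ => rfl⟩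
  comp {X Y Z} f g := ⟨g.val ∘ f.val, fun a x => by
    simp only [Function.comp_apply, f.property a x, g.property a (f.val x)]⟩
  id_comp f := Subtype.ext rfl
  comp_id f := Subtype.ext rfl
  assoc f g h := Subtype.ext rfl

/-- The free left `G`-set on a set `I`, with action on the first coordinate. -/
@[reducible] def freeL (G : Type u) [Monoid G] (I : Type u) : GSet G where
  carrier := G × I
  smul g p := (g * p.1, p.2)
  one_smul p := by simp
  mul_smul g h p := by simp [mul_assoc]

/-- The free right `G`-set on a set `I` (as a left `Gᵐᵒᵖ`-set), with action on the second
coordinate. -/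
@[reducible] def freeR (G : Type u) [Monoid G] (I : Type u) : GSet Gᵐᵒᵖ where
  carrier := I × G
  smul g p := (p.1, p.2 * g.unop)
  one_smul p := by simp
  mul_smul g h p := by simp [mul_assoc]

/-- `G` as a left `G`-set via left multiplication (the left regular representation). -/
@[reducible] def regL (G : Type u) [Monoid G] : GSet G where
  carrier := G
  smul g x := g * x
  one_smul := one_mul
  mul_smul := mul_assoc

/-- `G` as a right `G`-set via right multiplication (the right regular representation). -/
@[reducible] def regR (G : Type u) [Monoid G] : GSet Gᵐᵒᵖ where
  carrier := G
  smul g x := x * g.unop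
  one_smul := mul_one
  mul_smul g h x := (mul_assoc x h.unop g.unop).symm

/-- The functor `H_* : (left G-sets)ᵒᵖ ⥤ right G-sets`, `Y ↦ Hom_G(Y, G)` with the right
`G`-action `(f • g)(y) = f(y) * g`. -/
@[reducible] def lowerG (G : Type u) [Monoid G] : (GSet G)ᵒᵖ ⥤ GSet Gᵐᵒᵖ where
  obj Y :=
    { carrier := Y.unop ⟶ regL G
      smul := fun g f => ⟨fun y => f.val y * g.unop, fun h y => by
        simp only [f.property h y]
        exact (mul_assoc h (f.val y) g.unop)⟩
      one_smul := fun f => Subtype.ext (funext fun y => mul_one _)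
      mul_smul := fun g h f => Subtype.ext (funext fun y => (mul_assoc _ _ _).symm) }
  map {Y Y'} φ :=
    ⟨fun f => φ.unop ≫ f, fun g f => Subtype.ext rfl⟩
  map_id Y := Subtype.ext (funext fun f => Subtype.ext rfl)
  map_comp φ ψ := Subtype.ext (funext fun f => Subtype.ext rfl)

/-- The functor `H^* : right G-sets ⥤ (left G-sets)ᵒᵖ`, `X ↦ Hom_G(X, G)` with the left
`G`-action `(g · f)(x) = g * f(x)`. -/
@[reducible] def upperG (G : Type u) [Monoid G] : GSet Gᵐᵒᵖ ⥤ (GSet G)ᵒᵖ where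
  obj X := op
    { carrier := X ⟶ regR G
      smul := fun g f => ⟨fun x => g * f.val x, fun h x => by
        simp only [f.property h x]
        exact (mul_assoc g (f.val x) h.unop).symm⟩
      one_smul := fun f => Subtype.ext (funext fun x => one_mul _)
      mul_smul := fun g h f => Subtype.ext (funext fun x => mul_assoc _ _ _) }
  map {X X'} φ := Quiver.Hom.op
    ⟨fun f => φ ≫ f, fun g f => Subtype.ext rfl⟩
  map_id X := by
    apply Quiver.Hom.unop_inj
    exact Subtype.ext (funext fun f => Subtype.ext rfl)
  map_comp φ ψ := by
    apply Quiver.Hom.unop_inj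
    exact Subtype.ext (funext fun f => Subtype.ext rfl)

/-- The Isbell adjunction `H^* ⊣ H_*` between right `G`-sets and the opposite of left
`G`-sets. -/
def gsetIsbellAdj (G : Type u) [Monoid G] : upperG G ⊣ lowerG G :=
  Adjunction.mkOfHomEquiv
    { homEquiv := fun X Y =>
        { toFun := fun t =>
            ⟨fun x => ⟨fun y => (t.unop.val y).val x, fun g y => by
                have := congrFun (congrArg Subtype.val (t.unop.property g y)) x
                simpa [upperG, regL] using this⟩,
              fun g x => Subtype.ext (funext fun y => by
                have := (t.unop.val y).property g x
                simpa [regR, lowerG] using this)⟩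
          invFun := fun s => Quiver.Hom.op
            ⟨fun y => ⟨fun x => (s.val x).val y, fun g x => by
                have := congrFun (congrArg Subtype.val (s.property g x)) y
                simpa [lowerG, regR] using this⟩,
              fun g y => Subtype.ext (funext fun x => by
                have := (s.val x).property g y
                simpa [regL, upperG] using this)⟩
          left_inv := fun t => by
            apply Quiver.Hom.unop_inj
            exact Subtype.ext (funext fun y => Subtype.ext rfl)
          right_inv := fun s => Subtype.ext (funext fun x => Subtype.ext rfl) }
      homEquiv_naturality_left_symm := by
        intro X X' Y f g
        apply Quiver.Hom.unop_inj
        exact Subtype.ext (funext fun y => Subtype.ext rfl)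
      homEquiv_naturality_right := by
        intro X Y Y' f g
        exact Subtype.ext (funext fun x => Subtype.ext rfl) }

/-- The predicate on left `G`-sets: being a one-element `G`-set or a free `G`-set. -/
def IsSingletonOrFreeL (G : Type u) [Monoid G] (Y : GSet G) : Prop :=
  (Nonempty Y.carrier ∧ Subsingleton Y.carrier) ∨ ∃ I : Type u, Nonempty (Y ≅ freeL G I)

/-- The predicate on right `G`-sets: being a one-element `G`-set or a free `G`-set. -/
def IsSingletonOrFreeR (G : Type u) [Monoid G] (X : GSet Gᵐᵒᵖ) : Prop :=
  (Nonempty X.carrier ∧ Subsingleton X.carrier) ∨ ∃ I : Type u, Nonempty (X ≅ freeR G I)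

section DMAux

open CategoryTheory Limits

variable {G : Type u} [Group G]

section Helpers

variable {H : Type u} [Monoid H]

lemma ghom_ext {X Y : GSet H} {f g : X ⟶ Y} (h : ∀ x, f.val x = g.val x) : f = g :=
  Subtype.ext (funext h)

lemma gval_comp {X Y Z : GSet H} (f : X ⟶ Y) (g : Y ⟶ Z) (x : X.carrier) :
    (f ≫ g).val x = g.val (f.val x) := rfl

/-- carriers of isomorphic `G`-sets are equivalent. -/
def isoEquiv {X Y : GSet H} (e : X ≅ Y) : X.carrier ≃ Y.carrier where
  toFun := e.hom.val
  invFun := e.inv.val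
  left_inv x := congrFun (congrArg Subtype.val e.hom_inv_id) x
  right_inv y := congrFun (congrArg Subtype.val e.inv_hom_id) y

/-- Any two empty `G`-sets are isomorphic. -/
def isoOfIsEmpty {X Y : GSet H} (hX : IsEmpty X.carrier) (hY : IsEmpty Y.carrier) : X ≅ Y where
  hom := ⟨fun x => (hX.false x).elim, fun g x => (hX.false x).elim⟩
  inv := ⟨fun y => (hY.false y).elim, fun g y => (hY.false y).elim⟩
  hom_inv_id := ghom_ext fun x => (hX.false x).elim
  inv_hom_id := ghom_ext fun y => (hY.false y).elim

lemma gIsIso_of_bijective {X Y : GSet H} (f : X ⟶ Y) (hf : Function.Bijective f.val) :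
    IsIso f := by
  let e := Equiv.ofBijective f.val hf
  refine ⟨⟨e.symm, fun g y => ?_⟩, ghom_ext fun x => e.symm_apply_apply x,
    ghom_ext fun y => e.apply_symm_apply y⟩
  apply hf.1
  show f.val (e.symm (Y.smul g y)) = f.val (X.smul g (e.symm y))
  rw [f.property]
  show e (e.symm (Y.smul g y)) = Y.smul g (e (e.symm y))
  rw [e.apply_symm_apply, e.apply_symm_apply]

end Helpers

section FreeHelpers

variable {I J : Type u}

lemma freeL_apply {Z : GSet G} (α : freeL G I ⟶ Z) (g : G) (i : I) :
    α.val (g, i) = Z.smul g (α.val (1, i)) := by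
  have h : ((g : G), i) = (freeL G I).smul g ((1 : G), i) := by
    show ((g : G), i) = (g * 1, i); rw [mul_one]
  rw [h, α.property]

lemma freeL_hom_ext {Z : GSet G} {α β : freeL G I ⟶ Z}
    (h : ∀ i, α.val (1, i) = β.val (1, i)) : α = β := by
  apply ghom_ext; rintro ⟨g, i⟩
  rw [freeL_apply α, freeL_apply β, h]

/-- The equivariant map `freeL G I ⟶ regL G` determined by a function `I → G`. -/
def mkF (c : I → G) : freeL G I ⟶ regL G :=
  ⟨fun p => p.1 * c p.2, fun g p => mul_assoc g p.1 (c p.2)⟩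

lemma mkF_val (c : I → G) (x : G) (i : I) : (mkF c).val (x, i) = x * c i := rfl

lemma comp_eval {Z : GSet G} (φ : freeL G I ⟶ Z) (β : Z ⟶ regL G) (i : I) :
    (φ ≫ β).val (1, i) = β.val (φ.val (1, i)) := rfl

lemma comp_eval' (φ : freeL G I ⟶ freeL G J) (β : freeL G J ⟶ regL G) (i : I) :
    (φ ≫ β).val (1, i) = (φ.val (1, i)).1 * β.val (1, (φ.val (1, i)).2) := by
  rw [comp_eval]
  conv_lhs => rw [show φ.val (1, i) = ((φ.val (1, i)).1, (φ.val (1, i)).2) from rfl]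
  rw [freeL_apply β]

end FreeHelpers

section Singletons

lemma hom_to_regL_isEmpty (hnt : ∃ e : G, e ≠ 1) {X : GSet G}
    (hne : Nonempty X.carrier) (hsub : Subsingleton X.carrier) :
    IsEmpty (X ⟶ regL G) := by
  obtain ⟨e, he⟩ := hnt
  refine ⟨fun f => he ?_⟩
  obtain ⟨x⟩ := hne
  have h1 : f.val (X.smul e x) = e * f.val x := f.property e x
  rw [hsub.elim (X.smul e x) x] at h1
  exact mul_right_cancel (b := f.val x) (by rw [one_mul]; exact h1.symm)

lemma hom_to_regR_isEmpty (hnt : ∃ e : G, e ≠ 1) {X : GSet Gᵐᵒᵖ}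
    (hne : Nonempty X.carrier) (hsub : Subsingleton X.carrier) :
    IsEmpty (X ⟶ regR G) := by
  obtain ⟨e, he⟩ := hnt
  refine ⟨fun f => he ?_⟩
  obtain ⟨x⟩ := hne
  have h1 : f.val (X.smul (MulOpposite.op e) x) = f.val x * e := f.property (MulOpposite.op e) x
  rw [hsub.elim (X.smul (MulOpposite.op e) x) x] at h1
  exact mul_left_cancel (a := f.val x) (by rw [mul_one]; exact h1.symm)

end Singletons

section FreeRHelpers

variable {J : Type u}

lemma freeR_apply {Z : GSet Gᵐᵒᵖ} (f : freeR G J ⟶ Z) (j : J) (x : G) :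
    f.val (j, x) = Z.smul (MulOpposite.op x) (f.val (j, 1)) := by
  have h : ((j : J), x) = (freeR G J).smul (MulOpposite.op x) (j, (1 : G)) := by
    show ((j : J), x) = (j, 1 * x); rw [one_mul]
  rw [h, f.property]

lemma freeR_hom_ext {Z : GSet Gᵐᵒᵖ} {α β : freeR G J ⟶ Z}
    (h : ∀ j, α.val (j, 1) = β.val (j, 1)) : α = β := by
  apply ghom_ext; rintro ⟨j, x⟩
  rw [freeR_apply α, freeR_apply β, h]

/-- The equivariant map `freeR G J ⟶ regR G` determined by a function `J → G`. -/
def mkFR (c : J → G) : freeR G J ⟶ regR G :=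
  ⟨fun p => c p.1 * p.2, fun g p => (mul_assoc (c p.1) p.2 g.unop).symm⟩

end FreeRHelpers

section MemLemmas

/-- `Hom_G(G × I, G)` is a free right `G`-set when `I` is nonempty. -/
noncomputable def lowerFreeIso (I : Type u) [Nonempty I] :
    (lowerG G).obj (op (freeL G I)) ≅
      freeR G {k : I → G // k (Classical.arbitrary I) = 1} := by
  set i₀ := Classical.arbitrary I with hi₀
  refine ⟨⟨fun α => (⟨fun i => α.val (1, i) * (α.val (1, i₀))⁻¹, by simp⟩, α.val (1, i₀)), ?_⟩,
    ⟨fun p => mkF (fun i => p.1.val i * p.2), ?_⟩, ?_, ?_⟩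
  · intro g α
    refine Prod.ext (Subtype.ext (funext fun i => ?_)) rfl
    show (α.val (1, i) * g.unop) * (α.val (1, i₀) * g.unop)⁻¹ = α.val (1, i) * (α.val (1, i₀))⁻¹
    rw [mul_inv_rev]; group
  · intro g p
    apply Subtype.ext; funext y
    show y.1 * (p.1.val y.2 * (p.2 * g.unop)) = (y.1 * (p.1.val y.2 * p.2)) * g.unop
    rw [mul_assoc, mul_assoc]
  · apply ghom_ext; intro α
    apply Subtype.ext; funext y
    show y.1 * ((α.val (1, y.2) * (α.val (1, i₀))⁻¹) * α.val (1, i₀)) = α.val y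
    rw [inv_mul_cancel_right]
    have : α.val y = α.val (y.1, y.2) := rfl
    rw [this, freeL_apply α y.1 y.2]
  · apply ghom_ext; rintro ⟨k, x⟩
    refine Prod.ext (Subtype.ext (funext fun i => ?_)) ?_
    · show (1 * (k.val i * x)) * (1 * (k.val i₀ * x))⁻¹ = k.val i
      rw [k.prop]; group
    · show 1 * (k.val i₀ * x) = x
      rw [k.prop]; group

lemma lower_mem (hnt : ∃ e : G, e ≠ 1) (Z : GSet G) (hZ : IsSingletonOrFreeL G Z) :
    IsSingletonOrFreeR G ((lowerG G).obj (op Z)) := by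
  rcases hZ with ⟨hne, hsub⟩ | ⟨I, ⟨e⟩⟩
  · right
    refine ⟨PEmpty, ⟨isoOfIsEmpty ?_ ⟨fun p => p.1.elim⟩⟩⟩
    exact hom_to_regL_isEmpty hnt hne hsub
  · have e2 : (lowerG G).obj (op Z) ≅ (lowerG G).obj (op (freeL G I)) :=
      ((lowerG G).mapIso e.op).symm
    rcases isEmpty_or_nonempty I with hI | hI
    · left
      constructor
      · exact ⟨(isoEquiv e2).symm (mkF fun _ => 1)⟩
      · haveI : Subsingleton ((lowerG G).obj (op (freeL G I))).carrier :=
          ⟨fun a b => freeL_hom_ext (fun i => hI.elim i)⟩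
        exact (isoEquiv e2).subsingleton
    · exact Or.inr ⟨_, ⟨e2.trans (lowerFreeIso I)⟩⟩

/-- `Hom_G(J × G, G)` is a free left `G`-set when `J` is nonempty. -/
noncomputable def upperFreeIso (J : Type u) [Nonempty J] :
    ((upperG G).obj (freeR G J)).unop ≅
      freeL G {k : J → G // k (Classical.arbitrary J) = 1} := by
  set j₀ := Classical.arbitrary J with hj₀
  refine ⟨⟨fun f => (f.val (j₀, 1), ⟨fun j => (f.val (j₀, 1))⁻¹ * f.val (j, 1), by simp⟩), ?_⟩,
    ⟨fun p => ⟨fun q => (p.1 * p.2.val q.1) * q.2, fun g q => ?_⟩, ?_⟩, ?_, ?_⟩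
  · intro g f
    refine Prod.ext rfl (Subtype.ext (funext fun j => ?_))
    show (g * f.val (j₀, 1))⁻¹ * (g * f.val (j, 1)) = (f.val (j₀, 1))⁻¹ * f.val (j, 1)
    rw [mul_inv_rev]; group
  · show (p.1 * p.2.val q.1) * (q.2 * g.unop) = ((p.1 * p.2.val q.1) * q.2) * g.unop
    group
  · intro g p
    apply Subtype.ext; funext q
    show ((g * p.1) * p.2.val q.1) * q.2 = g * ((p.1 * p.2.val q.1) * q.2)
    group
  · apply ghom_ext; intro f
    apply Subtype.ext; funext q
    show (f.val (j₀, 1) * ((f.val (j₀, 1))⁻¹ * f.val (q.1, 1))) * q.2 = f.val q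
    rw [mul_inv_cancel_left]
    have : f.val q = f.val (q.1, q.2) := rfl
    rw [this, freeR_apply f q.1 q.2]
    rfl
  · apply ghom_ext; rintro ⟨x, k⟩
    refine Prod.ext ?_ (Subtype.ext (funext fun j => ?_))
    · show (x * k.val j₀) * 1 = x
      rw [k.prop]; group
    · show ((x * k.val j₀) * 1)⁻¹ * ((x * k.val j) * 1) = k.val j
      rw [k.prop]; group

lemma upper_mem (hnt : ∃ e : G, e ≠ 1) (X : GSet Gᵐᵒᵖ) (hX : IsSingletonOrFreeR G X) :
    IsSingletonOrFreeL G ((upperG G).obj X).unop := by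
  rcases hX with ⟨hne, hsub⟩ | ⟨J, ⟨e⟩⟩
  · right
    refine ⟨PEmpty, ⟨isoOfIsEmpty ?_ ⟨fun p => p.2.elim⟩⟩⟩
    exact hom_to_regR_isEmpty hnt hne hsub
  · have e2 : ((upperG G).obj X).unop ≅ ((upperG G).obj (freeR G J)).unop :=
      ((upperG G).mapIso e).unop.symm
    rcases isEmpty_or_nonempty J with hJ | hJ
    · left
      constructor
      · exact ⟨(isoEquiv e2).symm ⟨fun q => isEmptyElim q.1, fun g q => isEmptyElim q.1⟩⟩
      · haveI : Subsingleton (((upperG G).obj (freeR G J)).unop).carrier :=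
          ⟨fun a b => freeR_hom_ext (fun j => hJ.elim j)⟩
        exact (isoEquiv e2).subsingleton
    · exact Or.inr ⟨_, ⟨e2.trans (upperFreeIso J)⟩⟩

end MemLemmas


section Functors

variable (hnt : ∃ e₀ : G, e₀ ≠ 1)

/-- The restriction of `lowerG` to the full subcategories. -/
def RR : (ObjectProperty.FullSubcategory (IsSingletonOrFreeL G))ᵒᵖ ⥤ ObjectProperty.FullSubcategory (IsSingletonOrFreeR G) :=
  ObjectProperty.lift (IsSingletonOrFreeR G)
    ((ObjectProperty.ι (IsSingletonOrFreeL G)).op ⋙ lowerG G)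
    (fun Y => lower_mem hnt _ Y.unop.property)

/-- The restriction of `upperG` to the full subcategories. -/
def LL : ObjectProperty.FullSubcategory (IsSingletonOrFreeR G) ⥤ (ObjectProperty.FullSubcategory (IsSingletonOrFreeL G))ᵒᵖ where
  obj X := op ⟨((upperG G).obj X.obj).unop, upper_mem hnt X.obj X.property⟩
  map {X Y} f :=
    (show (⟨((upperG G).obj Y.obj).unop, upper_mem hnt Y.obj Y.property⟩ :
          ObjectProperty.FullSubcategory (IsSingletonOrFreeL G)) ⟶
        ⟨((upperG G).obj X.obj).unop, upper_mem hnt X.obj X.property⟩ from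
      ObjectProperty.homMk ((upperG G).map f.hom).unop).op
  map_id X := by
    apply Quiver.Hom.unop_inj
    exact InducedCategory.hom_ext (Subtype.ext (funext fun f => Subtype.ext rfl))
  map_comp f g := by
    apply Quiver.Hom.unop_inj
    exact InducedCategory.hom_ext (Subtype.ext (funext fun f => Subtype.ext rfl))

/-- The restricted Isbell adjunction. -/
noncomputable def adjR : LL hnt ⊣ RR hnt :=
  (gsetIsbellAdj G).restrictFullyFaithful
    (Functor.FullyFaithful.ofFullyFaithful (ObjectProperty.ι (IsSingletonOrFreeR G)))
    (Functor.FullyFaithful.ofFullyFaithful (ObjectProperty.ι (IsSingletonOrFreeL G)).op)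
    (NatIso.ofComponents (fun X => Iso.refl _)
      (by intros; simp only [Iso.refl_hom, Category.comp_id, Category.id_comp]; rfl))
    (NatIso.ofComponents (fun Y => Iso.refl _)
      (by intros; simp only [Iso.refl_hom, Category.comp_id, Category.id_comp]; rfl))

end Functors

section Reflect

/-- Precomposition with an isomorphism is a bijection on hom-sets. -/
def precompEquiv {X X' W : GSet G} (e : X ≅ X') : (X' ⟶ W) ≃ (X ⟶ W) where
  toFun β := e.hom ≫ β
  invFun β := e.inv ≫ β
  left_inv β := by simp
  right_inv β := by simp

lemma concrete_reflect (hnt : ∃ e₀ : G, e₀ ≠ 1) {I J : Type u} (φ : freeL G I ⟶ freeL G J)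
    (hb : Function.Bijective fun (β : freeL G J ⟶ regL G) => φ ≫ β) :
    Function.Bijective φ.val := by
  classical
  obtain ⟨e₀, he₀⟩ := hnt
  have hsurj2 : ∀ j : J, ∃ i, (φ.val (1, i)).2 = j := by
    intro j₀
    by_contra hj
    push_neg at hj
    have heq : φ ≫ mkF (fun _ => 1) = φ ≫ mkF (fun j => if j = j₀ then e₀ else 1) := by
      apply freeL_hom_ext
      intro i
      rw [comp_eval', comp_eval', mkF_val, mkF_val, if_neg (hj i)]
    have h2 := congrFun (congrArg Subtype.val (hb.1 heq)) (1, j₀)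
    rw [mkF_val, mkF_val, if_pos rfl] at h2
    exact he₀ (mul_left_cancel h2).symm
  have hinj2 : ∀ i i', (φ.val (1, i)).2 = (φ.val (1, i')).2 → i = i' := by
    intro i i' hji
    by_contra hne
    obtain ⟨β, hβ⟩ := hb.2 (mkF fun _ => 1)
    have h1 := congrFun (congrArg Subtype.val hβ) ((1 : G), i)
    have h1' := congrFun (congrArg Subtype.val hβ) ((1 : G), i')
    rw [comp_eval', mkF_val] at h1 h1'
    rw [hji] at h1
    have hφ1 : (φ.val (1, i)).1 = (φ.val (1, i')).1 := by
      have e1 : (φ.val (1, i)).1 * β.val (1, (φ.val (1, i')).2) =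
          (φ.val (1, i')).1 * β.val (1, (φ.val (1, i')).2) := by rw [h1, h1']
      exact mul_right_cancel e1
    obtain ⟨β', hβ'⟩ := hb.2 (mkF fun k => if k = i' then e₀ else 1)
    have g1 := congrFun (congrArg Subtype.val hβ') ((1 : G), i)
    have g1' := congrFun (congrArg Subtype.val hβ') ((1 : G), i')
    rw [comp_eval', mkF_val, if_neg hne] at g1
    rw [comp_eval', mkF_val, if_pos rfl] at g1'
    rw [hji, hφ1] at g1
    rw [g1] at g1'
    exact he₀ (mul_left_cancel g1').symm
  constructor
  · rintro ⟨x, i⟩ ⟨y, i'⟩ h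
    rw [freeL_apply φ x i, freeL_apply φ y i'] at h
    have h2 : (φ.val (1, i)).2 = (φ.val (1, i')).2 := by
      have := congrArg Prod.snd h; exact this
    have hii := hinj2 _ _ h2
    subst hii
    have h1 : x * (φ.val (1, i)).1 = y * (φ.val (1, i)).1 := by
      have := congrArg Prod.fst h; exact this
    rw [mul_right_cancel h1]
  · rintro ⟨x, j⟩
    obtain ⟨i, hi⟩ := hsurj2 j
    refine ⟨(x * ((φ.val (1, i)).1)⁻¹, i), ?_⟩
    rw [freeL_apply φ]
    show (x * ((φ.val (1, i)).1)⁻¹ * (φ.val (1, i)).1, (φ.val (1, i)).2) = (x, j)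
    rw [inv_mul_cancel_right, hi]

lemma bij_of_precomp (hnt : ∃ e₀ : G, e₀ ≠ 1) {Y Z : GSet G}
    (hY : IsSingletonOrFreeL G Y) (hZ : IsSingletonOrFreeL G Z) (φ : Y ⟶ Z)
    (hb : Function.Bijective fun (β : Z ⟶ regL G) => φ ≫ β) :
    Function.Bijective φ.val := by
  rcases hY with ⟨hne, hsub⟩ | ⟨I, ⟨eY⟩⟩
  · rcases hZ with ⟨hne', hsub'⟩ | ⟨J, ⟨eZ⟩⟩
    · constructor
      · intro a b _; exact hsub.elim a b
      · intro z; exact ⟨hne.some, hsub'.elim _ z⟩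
    · exact ((hom_to_regL_isEmpty hnt hne hsub).false (φ ≫ (eZ.hom ≫ mkF fun _ => 1))).elim
  · rcases hZ with ⟨hne', hsub'⟩ | ⟨J, ⟨eZ⟩⟩
    · obtain ⟨β, -⟩ := hb.2 (eY.hom ≫ mkF fun _ => 1)
      exact ((hom_to_regL_isEmpty hnt hne' hsub').false β).elim
    · set φ' := eY.inv ≫ φ ≫ eZ.hom with hφ'
      have hb' : Function.Bijective fun (β : freeL G J ⟶ regL G) => φ' ≫ β := by
        have hcomp : (fun (β : freeL G J ⟶ regL G) => φ' ≫ β) =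
            (fun γ => eY.inv ≫ γ) ∘ (fun α => φ ≫ α) ∘ (fun β => eZ.hom ≫ β) := by
          funext β; simp [hφ']
        rw [hcomp]
        exact ((precompEquiv eY.symm).bijective).comp (hb.comp (precompEquiv eZ).bijective)
      have hc := concrete_reflect hnt φ' hb'
      have hval : φ.val = eZ.inv.val ∘ φ'.val ∘ eY.hom.val := by
        have h : φ = eY.hom ≫ φ' ≫ eZ.inv := by simp [hφ']
        rw [h]; rfl
      rw [hval]
      exact ((isoEquiv eZ).symm.bijective).comp (hc.comp (isoEquiv eY).bijective)

lemma reflects_iso (hnt : ∃ e₀ : G, e₀ ≠ 1) : (RR hnt).ReflectsIsomorphisms := by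
  constructor
  intro c d f hf
  rw [← isIso_unop_iff]
  have hbijmap : Function.Bijective ((RR hnt).map f).hom.val := by
    refine Function.bijective_iff_has_inverse.mpr
      ⟨(CategoryTheory.inv ((RR hnt).map f)).hom.val, fun α => ?_, fun α => ?_⟩
    · exact congrFun (congrArg (fun t => t.hom.val) (IsIso.hom_inv_id ((RR hnt).map f))) α
    · exact congrFun (congrArg (fun t => t.hom.val) (IsIso.inv_hom_id ((RR hnt).map f))) α
  have hbij : Function.Bijective
      ((ObjectProperty.ι (IsSingletonOrFreeL G)).map f.unop).val :=
    bij_of_precomp hnt d.unop.property c.unop.property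
      ((ObjectProperty.ι (IsSingletonOrFreeL G)).map f.unop) hbijmap
  have : IsIso ((ObjectProperty.ι (IsSingletonOrFreeL G)).map f.unop) :=
    gIsIso_of_bijective _ hbij
  exact isIso_of_fully_faithful (ObjectProperty.ι (IsSingletonOrFreeL G)) f.unop

end Reflect


section Coeq

lemma eqset_smul_iff {Yd Yc : GSet G} (φ ψ : Yd ⟶ Yc) (g : G) (x : Yd.carrier) :
    φ.val (Yd.smul g x) = ψ.val (Yd.smul g x) ↔ φ.val x = ψ.val x := by
  constructor
  · intro h
    have h2 : φ.val (Yd.smul g⁻¹ (Yd.smul g x)) = ψ.val (Yd.smul g⁻¹ (Yd.smul g x)) := by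
      rw [φ.property, ψ.property, h]
    rw [← Yd.mul_smul, inv_mul_cancel, Yd.one_smul] at h2
    exact h2
  · intro h; rw [φ.property, ψ.property, h]

/-- The equalizer sub-`G`-set of a pair of equivariant maps. -/
def eqObj {Yd Yc : GSet G} (φ ψ : Yd ⟶ Yc) : GSet G where
  carrier := {x : Yd.carrier // φ.val x = ψ.val x}
  smul g x := ⟨Yd.smul g x.val, by rw [φ.property, ψ.property, x.prop]⟩
  one_smul x := Subtype.ext (Yd.one_smul x.val)
  mul_smul g h x := Subtype.ext (Yd.mul_smul g h x.val)

/-- Inclusion of the equalizer. -/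
def eqι {Yd Yc : GSet G} (φ ψ : Yd ⟶ Yc) : eqObj φ ψ ⟶ Yd := ⟨Subtype.val, fun _ _ => rfl⟩

lemma all_eq_of_singleton (hnt : ∃ e₀ : G, e₀ ≠ 1) {Yd Yc : GSet G}
    (hne : Nonempty Yd.carrier) (hsub : Subsingleton Yd.carrier)
    (hc : IsSingletonOrFreeL G Yc) (φ ψ : Yd ⟶ Yc) :
    ∀ x, φ.val x = ψ.val x := by
  intro x
  rcases hc with ⟨hne', hsub'⟩ | ⟨J, ⟨e⟩⟩
  · exact hsub'.elim _ _
  · exfalso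
    obtain ⟨e₀, he₀⟩ := hnt
    have h1 : φ.val x = Yc.smul e₀ (φ.val x) := by
      have h := φ.property e₀ x
      rw [hsub.elim (Yd.smul e₀ x) x] at h
      exact h
    have h2 : e.hom.val (φ.val x) = (freeL G J).smul e₀ (e.hom.val (φ.val x)) := by
      conv_lhs => rw [h1]
      exact e.hom.property e₀ (φ.val x)
    have h3 : (e.hom.val (φ.val x)).1 = e₀ * (e.hom.val (φ.val x)).1 := by
      have := congrArg Prod.fst h2; exact this
    exact he₀ (mul_right_cancel (b := (e.hom.val (φ.val x)).1) (by rw [one_mul, ← h3]))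

lemma eq_mem (hnt : ∃ e₀ : G, e₀ ≠ 1) {Yd Yc : GSet G}
    (hd : IsSingletonOrFreeL G Yd) (hc : IsSingletonOrFreeL G Yc)
    (φ ψ : Yd ⟶ Yc) : IsSingletonOrFreeL G (eqObj φ ψ) := by
  rcases hd with ⟨hne, hsub⟩ | ⟨I, ⟨e⟩⟩
  · left
    exact ⟨⟨⟨hne.some, all_eq_of_singleton hnt hne hsub hc φ ψ hne.some⟩⟩,
      ⟨fun a b => Subtype.ext (hsub.elim a.val b.val)⟩⟩
  · right
    refine ⟨{i : I // φ.val (e.inv.val (1, i)) = ψ.val (e.inv.val (1, i))}, ⟨?_⟩⟩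
    have hlr : ∀ y, e.inv.val (e.hom.val y) = y :=
      fun y => congrFun (congrArg Subtype.val e.hom_inv_id) y
    have hrl : ∀ p, e.hom.val (e.inv.val p) = p :=
      fun p => congrFun (congrArg Subtype.val e.inv_hom_id) p
    have hkey : ∀ x : (eqObj φ ψ).carrier,
        φ.val (e.inv.val (1, (e.hom.val x.val).2)) = ψ.val (e.inv.val (1, (e.hom.val x.val).2)) := by
      intro x
      have h1 : ((1 : G), (e.hom.val x.val).2) =
          (freeL G I).smul ((e.hom.val x.val).1)⁻¹ (e.hom.val x.val) := by
        show ((1 : G), (e.hom.val x.val).2) =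
          (((e.hom.val x.val).1)⁻¹ * (e.hom.val x.val).1, (e.hom.val x.val).2)
        rw [inv_mul_cancel]
      rw [h1, e.inv.property, hlr]
      exact (eqset_smul_iff φ ψ _ _).mpr x.prop
    refine ⟨⟨fun x => ((e.hom.val x.val).1, ⟨(e.hom.val x.val).2, hkey x⟩), fun g x => ?_⟩,
      ⟨fun p => ⟨e.inv.val (p.1, p.2.val), ?_⟩, fun g p => ?_⟩, ?_, ?_⟩
    · refine Prod.ext ?_ (Subtype.ext ?_)
      · have := congrArg Prod.fst (e.hom.property g x.val); exact this
      · have := congrArg Prod.snd (e.hom.property g x.val); exact this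
    · have h1 : ((p.1 : G), p.2.val) = (freeL G I).smul p.1 (1, p.2.val) := by
        show ((p.1 : G), p.2.val) = (p.1 * 1, p.2.val); rw [mul_one]
      rw [h1, e.inv.property]
      exact (eqset_smul_iff φ ψ _ _).mpr p.2.prop
    · exact Subtype.ext (e.inv.property g (p.1, p.2.val))
    · apply ghom_ext; intro x
      exact Subtype.ext (hlr x.val)
    · apply ghom_ext; intro p
      refine Prod.ext ?_ (Subtype.ext ?_)
      · have := congrArg Prod.fst (hrl (p.1, p.2.val)); exact this
      · have := congrArg Prod.snd (hrl (p.1, p.2.val)); exact this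

open Classical in
/-- Coding function used in the main computation. -/
noncomputable def codeF {I J : Type u} (ψ : freeL G I ⟶ freeL G J)
    (α : freeL G I ⟶ regL G) : J → G := fun j =>
  if h : ∃ i, (ψ.val (1, i)).2 = j then ((ψ.val (1, h.choose)).1)⁻¹ * α.val (1, h.choose)
  else 1

lemma crux (hnt : ∃ e₀ : G, e₀ ≠ 1) {I J : Type u} (φ ψ : freeL G I ⟶ freeL G J)
    (τ : (freeL G I ⟶ regL G) → (freeL G J ⟶ regL G))
    (hτ : ∀ a, ψ ≫ τ a = a)
    (hρ : ∀ b, φ ≫ τ (φ ≫ b) = φ ≫ τ (ψ ≫ b))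
    (α α' : freeL G I ⟶ regL G)
    (hag : ∀ i, φ.val (1, i) = ψ.val (1, i) → α.val (1, i) = α'.val (1, i)) :
    φ ≫ τ α = φ ≫ τ α' := by
  classical
  obtain ⟨e₀, he₀⟩ := hnt
  have h2 : ∀ (a : freeL G I ⟶ regL G) (i : I),
      (τ a).val (1, (ψ.val (1, i)).2) = ((ψ.val (1, i)).1)⁻¹ * a.val (1, i) := by
    intro a i
    have h := congrFun (congrArg Subtype.val (hτ a)) ((1 : G), i)
    rw [comp_eval'] at h
    rw [← h, inv_mul_cancel_left]
  have dag : ∀ (b : freeL G J ⟶ regL G) (i i₂ : I), (ψ.val (1, i)).2 = (φ.val (1, i₂)).2 →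
      (φ ≫ b).val (1, i) = (ψ ≫ b).val (1, i) := by
    intro b i i₂ hj
    have h := congrFun (congrArg Subtype.val (hρ b)) ((1 : G), i₂)
    rw [comp_eval', comp_eval'] at h
    have h' := mul_left_cancel h
    rw [← hj] at h'
    rw [h2 (φ ≫ b) i, h2 (ψ ≫ b) i] at h'
    exact mul_left_cancel h'
  have step1 : ∀ i i₂ : I, (ψ.val (1, i)).2 = (φ.val (1, i₂)).2 →
      φ.val (1, i) = ψ.val (1, i) := by
    intro i i₂ hj
    have d1 := dag (mkF fun _ => 1) i i₂ hj
    rw [comp_eval', comp_eval', mkF_val, mkF_val] at d1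
    have hfst : (φ.val (1, i)).1 = (ψ.val (1, i)).1 := mul_right_cancel d1
    have d2 := dag (mkF fun j => if j = (φ.val (1, i)).2 then 1 else e₀) i i₂ hj
    rw [comp_eval', comp_eval', mkF_val, mkF_val, if_pos rfl] at d2
    rw [hfst] at d2
    have hsnd : (ψ.val (1, i)).2 = (φ.val (1, i)).2 := by
      by_contra hcon
      rw [if_neg hcon] at d2
      exact he₀ (mul_left_cancel (mul_left_cancel d2)).symm
    exact Prod.ext hfst hsnd.symm
  have step2 : ∀ i i' : I, (ψ.val (1, i)).2 = (ψ.val (1, i')).2 → i = i' := by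
    intro i i' hj
    have a1 := h2 (mkF fun _ => 1) i
    have a1' := h2 (mkF fun _ => 1) i'
    rw [hj, a1'] at a1
    rw [mkF_val, mkF_val] at a1
    have hfst : (ψ.val (1, i)).1 = (ψ.val (1, i')).1 := (inv_injective (mul_right_cancel a1)).symm
    by_contra hne
    have b1 := h2 (mkF fun k => if k = i then (1 : G) else e₀) i
    have b1' := h2 (mkF fun k => if k = i then (1 : G) else e₀) i'
    rw [hj, b1'] at b1
    rw [mkF_val, mkF_val, if_pos rfl, if_neg (fun hh => hne hh.symm)] at b1
    rw [hfst] at b1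
    exact he₀ (mul_left_cancel (mul_left_cancel b1))
  have hβgen : ∀ a : freeL G I ⟶ regL G, ψ ≫ mkF (codeF ψ a) = a := by
    intro a
    apply freeL_hom_ext
    intro i
    rw [comp_eval', mkF_val]
    simp only [codeF]
    have hex : ∃ i', (ψ.val (1, i')).2 = (ψ.val (1, i)).2 := ⟨i, rfl⟩
    rw [dif_pos hex]
    have hch : hex.choose = i := step2 _ _ hex.choose_spec
    rw [hch, one_mul, mul_inv_cancel_left]
  have hββ' : φ ≫ mkF (codeF ψ α) = φ ≫ mkF (codeF ψ α') := by
    apply freeL_hom_ext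
    intro i
    rw [comp_eval', comp_eval', mkF_val, mkF_val]
    simp only [codeF]
    by_cases hex : ∃ i₁, (ψ.val (1, i₁)).2 = (φ.val (1, i)).2
    · rw [dif_pos hex, dif_pos hex]
      have hmem := step1 hex.choose i hex.choose_spec
      rw [hag hex.choose hmem]
    · rw [dif_neg hex, dif_neg hex]
  calc φ ≫ τ α = φ ≫ τ (ψ ≫ mkF (codeF ψ α)) := by rw [hβgen]
    _ = φ ≫ τ (φ ≫ mkF (codeF ψ α)) := (hρ _).symm
    _ = φ ≫ τ (φ ≫ mkF (codeF ψ α')) := by rw [hββ']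
    _ = φ ≫ τ (ψ ≫ mkF (codeF ψ α')) := hρ _
    _ = φ ≫ τ α' := by rw [hβgen]

lemma key (hnt : ∃ e₀ : G, e₀ ≠ 1) {Yd Yc : GSet G}
    (hd : IsSingletonOrFreeL G Yd) (hc : IsSingletonOrFreeL G Yc)
    (φ ψ : Yd ⟶ Yc) (τ : (Yd ⟶ regL G) → (Yc ⟶ regL G))
    (hτ : ∀ a, ψ ≫ τ a = a)
    (hρ : ∀ b, φ ≫ τ (φ ≫ b) = φ ≫ τ (ψ ≫ b))
    (α α' : Yd ⟶ regL G)
    (hag : ∀ x, φ.val x = ψ.val x → α.val x = α'.val x) :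
    φ ≫ τ α = φ ≫ τ α' := by
  rcases hd with ⟨hne, hsub⟩ | ⟨I, ⟨eD⟩⟩
  · have h : α = α' := ghom_ext fun x => hag x (all_eq_of_singleton hnt hne hsub hc φ ψ x)
    rw [h]
  · rcases hc with ⟨hne', hsub'⟩ | ⟨J, ⟨eC⟩⟩
    · exact ((hom_to_regL_isEmpty hnt hne' hsub').false (τ α)).elim
    · set φ' := eD.inv ≫ φ ≫ eC.hom with hφ'
      set ψ' := eD.inv ≫ ψ ≫ eC.hom with hψ'
      set τ' : (freeL G I ⟶ regL G) → (freeL G J ⟶ regL G) :=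
        fun a => eC.inv ≫ τ (eD.hom ≫ a) with hτ'def
      have hτ' : ∀ a, ψ' ≫ τ' a = a := by
        intro a
        show (eD.inv ≫ ψ ≫ eC.hom) ≫ (eC.inv ≫ τ (eD.hom ≫ a)) = a
        simp only [Category.assoc, Iso.hom_inv_id_assoc]
        rw [hτ (eD.hom ≫ a)]
        simp only [Iso.inv_hom_id_assoc]
      have hρ' : ∀ b, φ' ≫ τ' (φ' ≫ b) = φ' ≫ τ' (ψ' ≫ b) := by
        intro b
        show (eD.inv ≫ φ ≫ eC.hom) ≫ (eC.inv ≫ τ (eD.hom ≫ (eD.inv ≫ φ ≫ eC.hom) ≫ b)) =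
          (eD.inv ≫ φ ≫ eC.hom) ≫ (eC.inv ≫ τ (eD.hom ≫ (eD.inv ≫ ψ ≫ eC.hom) ≫ b))
        simp only [Category.assoc, Iso.hom_inv_id_assoc, Iso.inv_hom_id_assoc]
        rw [hρ (eC.hom ≫ b)]
      have hag' : ∀ i, φ'.val (1, i) = ψ'.val (1, i) →
          (eD.inv ≫ α).val (1, i) = (eD.inv ≫ α').val (1, i) := by
        intro i hi
        show α.val (eD.inv.val (1, i)) = α'.val (eD.inv.val (1, i))
        apply hag
        have hi' : eC.hom.val (φ.val (eD.inv.val (1, i))) =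
            eC.hom.val (ψ.val (eD.inv.val (1, i))) := hi
        exact (isoEquiv eC).injective hi'
      have hcrux := crux hnt φ' ψ' τ' hτ' hρ' (eD.inv ≫ α) (eD.inv ≫ α') hag'
      have hexp : ∀ a : Yd ⟶ regL G, φ' ≫ τ' (eD.inv ≫ a) = eD.inv ≫ (φ ≫ τ a) := by
        intro a
        show (eD.inv ≫ φ ≫ eC.hom) ≫ (eC.inv ≫ τ (eD.hom ≫ eD.inv ≫ a)) =
          eD.inv ≫ (φ ≫ τ a)
        simp only [Category.assoc, Iso.hom_inv_id_assoc, Iso.inv_hom_id_assoc]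
      rw [hexp, hexp] at hcrux
      have hfin := congrArg (fun t => eD.hom ≫ t) hcrux
      simpa using hfin

lemma exists_extension (hnt : ∃ e₀ : G, e₀ ≠ 1) {Yd Yc : GSet G}
    (hd : IsSingletonOrFreeL G Yd) (hc : IsSingletonOrFreeL G Yc) (φ ψ : Yd ⟶ Yc) :
    ∃ ext : (eqObj φ ψ ⟶ regL G) → (Yd ⟶ regL G), ∀ γ, eqι φ ψ ≫ ext γ = γ := by
  classical
  rcases hd with ⟨hne, hsub⟩ | ⟨I, ⟨eD⟩⟩
  · have hall := all_eq_of_singleton hnt hne hsub hc φ ψ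
    refine ⟨fun γ => ⟨fun x => γ.val ⟨x, hall x⟩, fun g x => ?_⟩, fun γ => ?_⟩
    · exact γ.property g ⟨x, hall x⟩
    · apply ghom_ext; intro x
      exact congrArg γ.val (Subtype.ext rfl)
  · let w : Yd ⟶ regL G := eD.hom ≫ mkF fun _ => 1
    refine ⟨fun γ => ⟨fun x => if h : φ.val x = ψ.val x then γ.val ⟨x, h⟩ else w.val x,
      fun g x => ?_⟩, fun γ => ?_⟩
    · show (if hh : φ.val (Yd.smul g x) = ψ.val (Yd.smul g x) then γ.val ⟨Yd.smul g x, hh⟩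
          else w.val (Yd.smul g x)) =
        (regL G).smul g (if hh : φ.val x = ψ.val x then γ.val ⟨x, hh⟩ else w.val x)
      by_cases h : φ.val x = ψ.val x
      · rw [dif_pos ((eqset_smul_iff φ ψ g x).mpr h), dif_pos h]
        exact γ.property g ⟨x, h⟩
      · rw [dif_neg h, dif_neg (fun hc' => h ((eqset_smul_iff φ ψ g x).mp hc'))]
        exact w.property g x
    · apply ghom_ext; intro x
      show (if h : φ.val x.val = ψ.val x.val then γ.val ⟨x.val, h⟩ else w.val x.val) = γ.val x
      rw [dif_pos x.prop]
      exact congrArg γ.val (Subtype.ext rfl)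

end Coeq

section Main

variable (hnt : ∃ e₀ : G, e₀ ≠ 1)

/-- Coerce a morphism of the full subcategory to a `GSet` morphism. -/
abbrev toG {X Y : ObjectProperty.FullSubcategory (IsSingletonOrFreeL G)} (h : X ⟶ Y) : X.obj ⟶ Y.obj := h.hom

variable {c d : (ObjectProperty.FullSubcategory (IsSingletonOrFreeL G))ᵒᵖ}

/-- The equalizer object, as an object of the subcategory. -/
def eqSub (f g : c ⟶ d) : ObjectProperty.FullSubcategory (IsSingletonOrFreeL G) :=
  ⟨eqObj (toG f.unop) (toG g.unop), eq_mem hnt d.unop.property c.unop.property _ _⟩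

/-- The coequalizer cofork in the opposite of the subcategory. -/
abbrev coeqCofork (f g : c ⟶ d) : Cofork f g :=
  Cofork.ofπ
    ((show eqSub hnt f g ⟶ d.unop from ObjectProperty.homMk (eqι (toG f.unop) (toG g.unop))).op)
    (Quiver.Hom.unop_inj (InducedCategory.hom_ext (Subtype.ext (funext fun x => x.prop))))

/-- The cofork is a colimit. -/
def coeqIsColimit (f g : c ⟶ d) : IsColimit (coeqCofork hnt f g) := by
  refine Cofork.IsColimit.mk _ (fun s => ?_) (fun s => ?_) (fun s m hm => ?_)
  · exact Quiver.Hom.op (show s.pt.unop ⟶ eqSub hnt f g from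
      ObjectProperty.homMk ⟨fun x => ⟨s.π.unop.hom.val x,
          congrFun (congrArg (fun t => t.hom.val) (congrArg Quiver.Hom.unop s.condition)) x⟩,
        fun a x => Subtype.ext (s.π.unop.hom.property a x)⟩)
  · apply Quiver.Hom.unop_inj
    exact InducedCategory.hom_ext (Subtype.ext rfl)
  · apply Quiver.Hom.unop_inj
    apply InducedCategory.hom_ext
    apply Subtype.ext; funext x
    apply Subtype.ext
    exact congrFun (congrArg (fun t => t.hom.val) (congrArg Quiver.Hom.unop hm)) x

lemma hasCoeq : Monad.HasCoequalizerOfIsSplitPair (RR hnt) :=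
  ⟨fun f g _ => HasColimit.mk ⟨coeqCofork hnt f g, coeqIsColimit hnt f g⟩⟩

/-- The image cofork is a colimit, given the split hypothesis. -/
noncomputable def mappedIsColimit (f g : c ⟶ d) [hsplit : (RR hnt).IsSplitPair f g] :
    IsColimit (Cofork.ofπ ((RR hnt).map (coeqCofork hnt f g).π)
      (by rw [← Functor.map_comp, ← Functor.map_comp, Cofork.condition]) :
      Cofork ((RR hnt).map f) ((RR hnt).map g)) := by
  have hsp := hsplit.splittable
  let πQ := hsp.choose_spec.choose
  let spl := hsp.choose_spec.choose_spec.some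
  let τ : (d.unop.obj ⟶ regL G) → (c.unop.obj ⟶ regL G) := spl.leftSection.hom.val
  have hτ : ∀ a : d.unop.obj ⟶ regL G, toG g.unop ≫ τ a = a := fun a =>
    congrFun (congrArg (fun t => t.hom.val) spl.leftSection_bottom) a
  have hρcond : ∀ b, toG f.unop ≫ τ (toG f.unop ≫ b) = toG f.unop ≫ τ (toG g.unop ≫ b) := by
    intro b
    have h1 : ∀ x, toG f.unop ≫ τ x = spl.rightSection.hom.val (πQ.hom.val x) := fun x =>
      congrFun (congrArg (fun t => t.hom.val) spl.leftSection_top) x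
    have h2 : πQ.hom.val (toG f.unop ≫ b) = πQ.hom.val (toG g.unop ≫ b) :=
      congrFun (congrArg (fun t => t.hom.val) spl.condition) b
    rw [h1, h1, h2]
  have hext := exists_extension hnt d.unop.property c.unop.property (toG f.unop) (toG g.unop)
  let ext := hext.choose
  have hsec : ∀ γ, eqι (toG f.unop) (toG g.unop) ≫ ext γ = γ := hext.choose_spec
  have hsecpt : ∀ γ x (hx : (toG f.unop).val x = (toG g.unop).val x),
      (ext γ).val x = γ.val ⟨x, hx⟩ := by
    intro γ x hx
    have h := congrFun (congrArg Subtype.val (hsec γ)) ⟨x, hx⟩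
    exact h
  have hchi : ∀ (s : Cofork ((RR hnt).map f) ((RR hnt).map g))
      (α α' : d.unop.obj ⟶ regL G),
      (∀ x, (toG f.unop).val x = (toG g.unop).val x → α.val x = α'.val x) →
      s.π.hom.val α = s.π.hom.val α' := by
    intro s α α' hag
    have hcond : ∀ b, s.π.hom.val (toG f.unop ≫ b) = s.π.hom.val (toG g.unop ≫ b) := fun b =>
      congrFun (congrArg (fun t => t.hom.val) s.condition) b
    have hkey := key hnt d.unop.property c.unop.property (toG f.unop) (toG g.unop)
      τ hτ hρcond α α' hag
    calc s.π.hom.val α = s.π.hom.val (toG g.unop ≫ τ α) := by rw [hτ]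
      _ = s.π.hom.val (toG f.unop ≫ τ α) := (hcond (τ α)).symm
      _ = s.π.hom.val (toG f.unop ≫ τ α') := by rw [hkey]
      _ = s.π.hom.val (toG g.unop ≫ τ α') := hcond (τ α')
      _ = s.π.hom.val α' := by rw [hτ]
  refine Cofork.IsColimit.mk _ (fun s => ?_) (fun s => ?_) (fun s m hm => ?_)
  · refine ObjectProperty.homMk ⟨fun γ => s.π.hom.val (ext γ), fun gop γ =>
      (hchi s _ _ fun x hx => ?_).trans (s.π.hom.property gop (ext γ))⟩
    exact (hsecpt _ x hx).trans ((congrArg (fun t => t * gop.unop) (hsecpt γ x hx)).symm)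
  · apply InducedCategory.hom_ext; apply Subtype.ext; funext α
    refine hchi s _ _ (fun x hx => ?_)
    exact hsecpt _ x hx
  · apply InducedCategory.hom_ext; apply Subtype.ext; funext γ
    have h1 := congrFun (congrArg (fun t => t.hom.val) hm) (ext γ)
    exact ((congrArg m.hom.val (hsec γ)).symm.trans h1)

lemma preserves : Monad.PreservesColimitOfIsSplitPair (RR hnt) := by
  constructor
  intro A B f g hsp
  apply preservesColimit_of_preserves_colimit_cocone (coeqIsColimit hnt f g)
  exact (isColimitMapCoconeCoforkEquiv (RR hnt) _).symm (mappedIsColimit hnt f g)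

end Main


end DMAux

end DMCat

open DMCat

/-- Let `G` be a group with at least two elements, `D` the full subcategory
of left `G`-sets consisting of the one-element `G`-set and the free left `G`-sets, and `C` the
full subcategory of right `G`-sets consisting of the one-element `G`-set and the free right
`G`-sets.  Then the functor `Dᵒᵖ ⥤ C` sending a left `G`-set `Y` to `Hom_G(Y, G)` (with the
right `G`-action `(f • g)(y) = f(y) * g`) is well defined and is a monadic right adjoint. -/
theorem hom_into_G_restricted_is_monadic {G : Type u} [Group G] (hG : ∃ g₁ g₂ : G, g₁ ≠ g₂) :
    ∃ h : ∀ Y : (ObjectProperty.FullSubcategory (IsSingletonOrFreeL G))ᵒᵖ,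
        IsSingletonOrFreeR G
          (((ObjectProperty.ι (IsSingletonOrFreeL G)).op ⋙ lowerG G).obj Y),
      Nonempty (MonadicRightAdjoint
        (ObjectProperty.lift (IsSingletonOrFreeR G)
          ((ObjectProperty.ι (IsSingletonOrFreeL G)).op ⋙ lowerG G) h)) := by
  obtain ⟨g₁, g₂, hgg⟩ := hG
  have hnt : ∃ e₀ : G, e₀ ≠ 1 := ⟨g₁ * g₂⁻¹, fun h => hgg (mul_inv_eq_one.mp h)⟩
  refine ⟨fun Y => lower_mem hnt _ Y.unop.property, ⟨?_⟩⟩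
  show MonadicRightAdjoint (RR hnt)
  haveI := reflects_iso hnt
  haveI := hasCoeq hnt
  haveI := preserves hnt
  exact Monad.monadicOfHasPreservesGSplitCoequalizersOfReflectsIsomorphisms (adjR hnt)
end

section
/- Let G be a group with at least two elements and let f : G × I → G × J be a G-equivariant map between free left G-sets (action on the first coordinate). If the precomposition map Hom_G(G × J, G) → Hom_G(G × I, G), φ ↦ φ ∘ f, between the sets of left-G-equivariant maps to G (G with left multiplication) is a bijection, then f is bijective, i.e., an isomorphism of G-sets. -/
universe u

/-- Let `G` be a group with at least two elements and
`f : G × I → G × J` a `G`-equivariant map between free left `G`-sets (action on the first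
coordinate).  If precomposition with `f` is a bijection between the sets of `G`-equivariant
maps to `G` (with the left multiplication action), then `f` is bijective, i.e. an isomorphism
of `G`-sets. -/
theorem bijective_of_precomposition_bijective {G I J : Type u} [Group G]
    (hG : ∃ g₁ g₂ : G, g₁ ≠ g₂)
    (f : G × I → G × J)
    (hf : ∀ (g : G) (p : G × I), f (g * p.1, p.2) = (g * (f p).1, (f p).2))
    (hbij : Function.Bijective
      (fun φ : {φ : G × J → G // ∀ (g : G) (q : G × J), φ (g * q.1, q.2) = g * φ q} =>
        (⟨φ.val ∘ f, fun g p => by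
          simp only [Function.comp_apply, hf g p, φ.property g (f p)]⟩ :
          {ψ : G × I → G // ∀ (g : G) (p : G × I), ψ (g * p.1, p.2) = g * ψ p}))) :
    Function.Bijective f := by
  classical
  obtain ⟨g₁, g₂, hg⟩ := hG
  set a : I → G := fun i => (f (1, i)).1 with ha
  set σ : I → J := fun i => (f (1, i)).2 with hσ
  have hfeq : ∀ (g : G) (i : I), f (g, i) = (g * a i, σ i) := by
    intro g i
    have := hf g (1, i)
    simpa using this
  -- build an equivariant map from a function c : J → G
  let Φ : (J → G) → {φ : G × J → G // ∀ (g : G) (q : G × J), φ (g * q.1, q.2) = g * φ q} :=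
    fun c => ⟨fun q => q.1 * c q.2, fun g q => by simp [mul_assoc]⟩
  -- σ is surjective
  have hσsurj : Function.Surjective σ := by
    intro j₀
    by_contra h
    push_neg at h
    let c : G → (J → G) := fun x j => if j = j₀ then x else 1
    have heq : ∀ x : G, ∀ p : G × I, (Φ (c x)).val (f p) = (f p).1 := by
      intro x p
      have h2 : (f p).2 = σ p.2 := by
        have := hfeq p.1 p.2
        rw [show (p.1, p.2) = p from rfl] at this
        rw [this]
      simp only [Φ, h2, c]
      rw [if_neg (h p.2), mul_one]
    have : Φ (c g₁) = Φ (c g₂) := by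
      apply hbij.1
      apply Subtype.ext
      funext p
      exact (heq g₁ p).trans (heq g₂ p).symm
    have := congrArg (fun φ => φ.val (1, j₀)) this
    simp only [Φ, c, if_pos rfl, one_mul] at this
    exact hg this
  -- σ is injective
  have hσinj : Function.Injective σ := by
    intro i₁ i₂ hi
    by_contra hne
    set x := g₁ * g₂⁻¹ with hx
    have hx1 : x ≠ 1 := by
      intro hx1
      exact hg (by rwa [mul_inv_eq_one] at hx1)
    let d : I → G := fun i => if i = i₂ then a i₂ * x else a i
    obtain ⟨φ, hφ⟩ := hbij.2 ⟨fun p => p.1 * d p.2, fun g p => by simp [mul_assoc]⟩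
    have hval : ∀ i : I, a i * φ.val (1, σ i) = d i := by
      intro i
      have := congrArg (fun ψ => ψ.val (1, i)) hφ
      simp only [Function.comp_apply] at this
      rw [hfeq 1 i, one_mul] at this
      have heqv := φ.property (a i) (1, σ i)
      rw [mul_one] at heqv
      rw [heqv] at this
      simpa using this
    have h1 : φ.val (1, σ i₁) = 1 := by
      have := hval i₁
      rw [show d i₁ = a i₁ from if_neg hne] at this
      exact mul_left_cancel (by rw [this, mul_one])
    have h2 : φ.val (1, σ i₂) = x := by
      have := hval i₂
      rw [show d i₂ = a i₂ * x from if_pos rfl] at this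
      exact mul_left_cancel this
    rw [hi, h2] at h1
    exact hx1 h1
  constructor
  · intro p q hpq
    rw [show p = (p.1, p.2) from rfl, show q = (q.1, q.2) from rfl] at hpq ⊢
    rw [hfeq p.1 p.2, hfeq q.1 q.2] at hpq
    simp only [Prod.mk.injEq] at hpq
    obtain ⟨h1, h2⟩ := hpq
    have h2' : p.2 = q.2 := hσinj h2
    rw [h2'] at h1
    have h1' : p.1 = q.1 := mul_right_cancel h1
    rw [h1', h2']
  · intro q
    obtain ⟨i, hi⟩ := hσsurj q.2
    refine ⟨(q.1 * (a i)⁻¹, i), ?_⟩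
    rw [hfeq, hi, inv_mul_cancel_right]
end

section
/- Let f, g : X → Y be functions between sets, let e : E → X be the equalizer of f and g, and suppose f is injective and the square with both maps e : E → X against f and g is a pullback (i.e., for all x, x' ∈ X, f(x) = g(x') implies x = x' ∈ E). Then for every nonempty set R, the diagram (Y → R) ⇉ (X → R) → (E → R), with the two parallel maps given by precomposition with f and with g and the last map by precomposition with e, is a split coequalizer in Set; in particular, the functor R^(−) : Setᵒᵖ → Set sends such equalizers to coequalizers. -/
universe u v w

/-- Let `f, g : X → Y` with equalizer `e : E → X` (the inclusion of
`E = { x | f x = g x }`), suppose `f` is injective and the square with both maps `e` against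
`f` and `g` is a pullback (`f x = g x'` implies `x = x'` and `x ∈ E`).  Then for every nonempty
`R`, the diagram `(Y → R) ⇉ (X → R) → (E → R)` given by precomposition is a split coequalizer:
there are sections `s` and `t` with `q ∘ u = q ∘ v`, `q ∘ t = id`, `u ∘ s = id` and
`v ∘ s = t ∘ q`, where `u, v, q` are precomposition with `f, g, e` respectively. -/
theorem power_of_nice_equalizer_is_split_coequalizer {X Y : Type u}
    (f g : X → Y)
    (hinj : Function.Injective f)
    (hpb : ∀ x x' : X, f x = g x' → x = x' ∧ f x = g x)
    (R : Type v) (hR : Nonempty R) :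
    ∃ (s : (X → R) → (Y → R)) (t : (({x : X // f x = g x}) → R) → (X → R)),
      (fun (φ : Y → R) => (fun x : {x : X // f x = g x} => (φ ∘ f) x.val)) =
        (fun (φ : Y → R) => (fun x : {x : X // f x = g x} => (φ ∘ g) x.val)) ∧
      (∀ ψ : ({x : X // f x = g x}) → R, (fun x : {x : X // f x = g x} => t ψ x.val) = ψ) ∧
      (∀ φ : X → R, (s φ) ∘ f = φ) ∧
      (∀ φ : X → R, (s φ) ∘ g = t (fun x : {x : X // f x = g x} => φ x.val)) := by
  classical
  obtain ⟨r0⟩ := hR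
  refine ⟨fun φ y => if h : ∃ x, f x = y then φ h.choose else r0,
          fun ψ x => if h : f x = g x then ψ ⟨x, h⟩ else r0, ?_, ?_, ?_, ?_⟩
  · funext φ x
    simp [x.2]
  · intro ψ
    funext x
    simp [x.2]
  · intro φ
    funext x
    have h : ∃ x', f x' = f x := ⟨x, rfl⟩
    simp only [Function.comp_apply, dif_pos h]
    exact congrArg φ (hinj h.choose_spec)
  · intro φ
    funext x
    simp only [Function.comp_apply]
    by_cases h : ∃ x', f x' = g x
    · obtain ⟨hx1, hx2⟩ := hpb h.choose x h.choose_spec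
      rw [dif_pos h, dif_pos (hx1 ▸ hx2), hx1]
    · rw [dif_neg h, dif_neg (fun he => h ⟨x, he⟩)]
end
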